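/- Chain factorization: Let G be a finite directed graph without circuits, c a chain of G (a directed path) with vertex set V_c, and let G_1, ..., G_k be the connected components of G \ V_c. Define the regions Ḡ_i as the induced subgraphs on G_i ∪ V_c. Then N(G) = ∏_{j=1}^k N(Ḡ_j). -/

import Mathlib

open scoped BigOperators

/-- The field of rational functions in variables indexed by `V` over `ℚ`. -/
abbrev K (V : Type) : Type := FractionRing (MvPolynomial V ℚ)

/-- The variable `x_v` seen inside the field of rational functions. -/
noncomputable def xv {V : Type} (v : V) : K V :=
  algebraMap (MvPolynomial V ℚ) (K V) (MvPolynomial.X v)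

/-- `ψ_w = 1 / ∏ (x_{w_i} - x_{w_{i+1}})` for a word `w`. -/
noncomputable def psi {V : Type} (w : List V) : K V :=
  (((w.zip w.tail).map fun p => xv p.1 - xv p.2).prod)⁻¹

/-- The word (list of vertices) associated to an enumeration `σ` of the vertex set `W`. -/
def wordOf {V : Type} (W : Finset V) (σ : Fin W.card ≃ W) : List V :=
  (List.finRange W.card).map fun i => ((σ i : W) : V)

/-- `σ` enumerates `W` in an order compatible with all edges of `E`:
the origin of every edge appears before its end. -/
def IsExt {V : Type} (W : Finset V) (E : Finset (V × V)) (σ : Fin W.card ≃ W) : Prop :=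
  ∀ e ∈ E, ∃ i j : Fin W.card, i < j ∧ ((σ i : W) : V) = e.1 ∧ ((σ j : W) : V) = e.2

instance {V : Type} [DecidableEq V] (W : Finset V) (E : Finset (V × V)) (σ : Fin W.card ≃ W) :
    Decidable (IsExt W E σ) := by unfold IsExt; exact inferInstance

/-- `Ψ(G) = Σ_{w ∈ L(G)} ψ_w`, the sum over linear extensions of the graph with
vertex set `W` and edge set `E`. -/
noncomputable def PsiG {V : Type} [DecidableEq V] (W : Finset V) (E : Finset (V × V)) : K V :=
  ∑ σ : Fin W.card ≃ W, if IsExt W E σ then psi (wordOf W σ) else 0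

/-- `N(G) = Ψ(G) ⬝ ∏_{(a,b) ∈ E} (x_a - x_b)`. -/
noncomputable def NG {V : Type} [DecidableEq V] (W : Finset V) (E : Finset (V × V)) : K V :=
  PsiG W E * ∏ e ∈ E, (xv e.1 - xv e.2)

/-- `φ(G)`, the formal sum of the linear extensions of `G` in the free abelian
group on words. -/
noncomputable def phiG {V : Type} [DecidableEq V] (W : Finset V) (E : Finset (V × V)) :
    List V →₀ ℤ :=
  ∑ σ : Fin W.card ≃ W, if IsExt W E σ then Finsupp.single (wordOf W σ) 1 else 0

/-- The graph has no directed circuit. -/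
def Acyclic {V : Type} (E : Finset (V × V)) : Prop :=
  ∀ v : V, ¬ Relation.TransGen (fun a b => (a, b) ∈ E) v v

/-- The underlying undirected simple graph of the directed graph with edge set `E`. -/
def undirected {V : Type} (E : Finset (V × V)) : SimpleGraph V :=
  SimpleGraph.fromRel fun a b => (a, b) ∈ E

/-- The cyclically-consecutive pairs of a list of vertices. -/
def cyclePairs {V : Type} [DecidableEq V] (vs : List V) : Finset (V × V) :=
  Finset.image (fun i : Fin vs.length => (vs.get i, vs.get (finRotate _ i))) Finset.univ

/-- `vs` is (the vertex list of) a cycle of the graph `E`, whose set of forward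
edges (edges traversed in their graph orientation) is `HE`. -/
def IsCycle {V : Type} [DecidableEq V] (E : Finset (V × V)) (vs : List V)
    (HE : Finset (V × V)) : Prop :=
  2 ≤ vs.length ∧ vs.Nodup ∧ HE ⊆ cyclePairs vs ∧ HE ⊆ E ∧
    ∀ p ∈ cyclePairs vs, p ∉ HE → (p.2, p.1) ∈ E

/-!
A linear extension `w` of `G` restricts to linear extensions `u`, `v` of two regions `P` and `Q`
glued along the chain `c`, and since every edge lies in one region, the linear extensions of `G`
restricting to `u` and `v` are exactly the amalgamated shuffles of `u` and `v`. In every linear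
extension of a region the chain appears in its own order, so `u` and `v` have exactly the
letters of `c` in common, in the same order. The amalgamated shuffle identity
`∑_{w ∈ u ⧢_c v} ψ_w = ψ_u ψ_v ∏ (x_{c_i} - x_{c_{i+1}})` then gives
`Ψ(P ∪ Q) = Ψ(P) Ψ(Q) ∏ (x_{c_i} - x_{c_{i+1}})`. It is proved by induction on the first
letters, through the version where all words get a fresh first letter `s`; the inductive step
rests on partial fraction identities such as
`1 / ((x_s - x_a)(x_a - x_b)) + 1 / ((x_s - x_b)(x_b - x_a)) = 1 / ((x_s - x_a)(x_s - x_b))`.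
Acyclicity and the absence of transitivity edges make the chain edges the only edges inside
`c`, so the edge products of the two regions multiply to that of `G` times
`∏ (x_{c_i} - x_{c_{i+1}})`, whence `N(P ∪ Q) = N(P) N(Q)`; induct on the number of components.
-/

open scoped List

namespace List

variable {α : Type*}

lemma pairwise_pair_sublist (l : List α) : l.Pairwise fun a b => [a, b] <+ l :=
  pairwise_of_forall_sublist id

lemma isChain_iff_forall_mem_zip_tail {R : α → α → Prop} {l : List α} :
    l.IsChain R ↔ ∀ p ∈ l.zip l.tail, R p.1 p.2 := by
  induction l with
  | nil => simp
  | cons a t ih =>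
    cases t with
    | nil => simp
    | cons b t => simp [ih]

lemma mem_of_mem_zip_tail {l : List α} {p : α × α} (hp : p ∈ l.zip l.tail) :
    p.1 ∈ l ∧ p.2 ∈ l :=
  ⟨(of_mem_zip hp).1, mem_of_mem_tail (of_mem_zip hp).2⟩

lemma Nodup.zip_tail {l : List α} (h : l.Nodup) : (l.zip l.tail).Nodup := by
  apply Nodup.of_map Prod.snd
  rw [map_snd_zip (by simp)]
  exact h.sublist (tail_sublist l)

lemma mem_zip_tail_of_getElem {l : List α} {i : ℕ} (hi : i + 1 < l.length) :
    (l[i], l[i + 1]) ∈ l.zip l.tail :=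
  mem_iff_getElem.2 ⟨i, by simp; omega, by simp⟩

lemma sublist_cons_iff_of_notMem {a : α} {l t : List α} (ha : a ∉ l) :
    l <+ a :: t ↔ l <+ t := by
  rw [sublist_cons_iff]
  exact or_iff_left (by rintro ⟨r, rfl, -⟩; exact ha mem_cons_self)

lemma eq_of_cons_sublist_cons_of_mem {a b : α} {u t : List α} (hb : b ∉ t)
    (h : a :: u <+ b :: t) (hmem : b ∈ a :: u) : a = b := by
  rcases sublist_cons_iff.1 h with h | ⟨r, hr, -⟩
  · exact absurd (h.subset hmem) hb
  · exact (cons.inj hr).1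

variable [DecidableEq α]

lemma Nodup.pairwise_idxOf_lt {w : List α} (hw : w.Nodup) :
    w.Pairwise fun a b => w.idxOf a < w.idxOf b := by
  rw [pairwise_iff_getElem]
  intro i j hi hj hij
  rwa [hw.idxOf_getElem, hw.idxOf_getElem]

lemma filter_mem_eq_of_pairwise {u w : List α} (hw : w.Nodup) (hu : u.Nodup) (hsub : u ⊆ w)
    (h : u.Pairwise fun a b => w.idxOf a < w.idxOf b) : w.filter (· ∈ u) = u := by
  refine Perm.eq_of_pairwise (le := fun a b => w.idxOf a < w.idxOf b)
    (fun _ _ _ _ h₁ h₂ => absurd (h₁.trans h₂) (lt_irrefl _))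
    (hw.pairwise_idxOf_lt.sublist filter_sublist) h ?_
  rw [perm_ext_iff_of_nodup (hw.filter _) hu]
  intro x
  simpa using fun hx => hsub hx

lemma Sublist.filter_mem_eq {u w : List α} (h : u <+ w) (hw : w.Nodup) :
    w.filter (· ∈ u) = u :=
  filter_mem_eq_of_pairwise hw (hw.sublist h) h.subset (hw.pairwise_idxOf_lt.sublist h)

lemma IsChain.filter_mem_eq {u w : List α} (hw : w.Nodup) (hu : u.Nodup) (hsub : u ⊆ w)
    (h : u.IsChain fun a b => [a, b] <+ w) : w.filter (· ∈ u) = u := by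
  refine filter_mem_eq_of_pairwise hw hu hsub ?_
  have hlt : (u.map w.idxOf).IsChain (· < ·) :=
    (isChain_map _).2 (h.imp fun _ _ => hw.pairwise_idxOf_lt.forall_sublist)
  exact pairwise_map.1 (isChain_iff_pairwise.1 hlt)

lemma filter_mem_cons_of_notMem {a : α} {l m : List α}
    (ha : a ∉ l) : l.filter (· ∈ a :: m) = l.filter (· ∈ m) :=
  filter_congr fun x hx => by simp [show x ≠ a from fun h => ha (h ▸ hx)]

end List

section

variable {V : Type}

noncomputable def diffProd (w : List V) : K V :=
  ((w.zip w.tail).map fun p => xv p.1 - xv p.2).prod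

lemma psi_eq_inv_diffProd (w : List V) : psi w = (diffProd w)⁻¹ := rfl

@[simp] lemma diffProd_nil : diffProd ([] : List V) = 1 := rfl

@[simp] lemma diffProd_singleton (a : V) : diffProd [a] = 1 := rfl

lemma diffProd_cons_cons (a b : V) (l : List V) :
    diffProd (a :: b :: l) = (xv a - xv b) * diffProd (b :: l) := by
  simp [diffProd]

@[simp] lemma psi_singleton (a : V) : psi [a] = 1 := by
  simp [psi_eq_inv_diffProd]

lemma psi_cons_cons (a b : V) (l : List V) :
    psi (a :: b :: l) = (xv a - xv b)⁻¹ * psi (b :: l) := by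
  simp only [psi_eq_inv_diffProd, diffProd_cons_cons, mul_inv]

lemma xv_injective : Function.Injective (xv (V := V)) :=
  (IsFractionRing.injective (MvPolynomial V ℚ) (K V)).comp MvPolynomial.X_injective

lemma xv_sub_xv_ne_zero {a b : V} (h : a ≠ b) : xv a - xv b ≠ 0 :=
  sub_ne_zero.2 (xv_injective.ne h)

lemma diffProd_ne_zero {w : List V} (hw : w.Nodup) : diffProd w ≠ 0 := by
  induction w with
  | nil => simp
  | cons a t ih =>
    cases t with
    | nil => simp
    | cons b t =>
      have hab : a ≠ b := fun h => (List.nodup_cons.1 hw).1 (h ▸ List.mem_cons_self)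
      rw [diffProd_cons_cons]
      exact mul_ne_zero (xv_sub_xv_ne_zero hab) (ih hw.of_cons)

lemma psi_mul_diffProd {w : List V} (hw : w.Nodup) : psi w * diffProd w = 1 :=
  inv_mul_cancel₀ (diffProd_ne_zero hw)

@[simp] lemma length_wordOf (W : Finset V) (σ : Fin W.card ≃ W) :
    (wordOf W σ).length = W.card := by
  simp [wordOf]

lemma getElem_wordOf (W : Finset V) (σ : Fin W.card ≃ W) (i : ℕ)
    (hi : i < (wordOf W σ).length) : (wordOf W σ)[i] = σ ⟨i, by simpa using hi⟩ := by
  simp [wordOf]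

lemma nodup_wordOf (W : Finset V) (σ : Fin W.card ≃ W) : (wordOf W σ).Nodup :=
  (List.nodup_finRange _).map fun _ _ h => σ.injective (Subtype.ext h)

lemma wordOf_injective (W : Finset V) : Function.Injective (wordOf W) := by
  intro σ τ h
  ext i
  have := congrArg (·[i.1]?) h
  simpa [wordOf] using this

variable [DecidableEq V]

/-! ### Linear extensions as words -/

def linExts (W : Finset V) (E : Finset (V × V)) : Finset (List V) :=
  (Finset.univ.filter (IsExt W E)).image (wordOf W)

lemma toFinset_wordOf (W : Finset V) (σ : Fin W.card ≃ W) : (wordOf W σ).toFinset = W := by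
  ext x
  simp only [wordOf, List.mem_toFinset, List.mem_map, List.mem_finRange, true_and]
  exact ⟨fun ⟨i, hi⟩ => hi ▸ (σ i).2, fun hx => ⟨σ.symm ⟨x, hx⟩, by simp⟩⟩

lemma isExt_iff_pair_sublist (W : Finset V) (E : Finset (V × V)) (σ : Fin W.card ≃ W) :
    IsExt W E σ ↔ ∀ e ∈ E, [e.1, e.2] <+ wordOf W σ := by
  refine forall₂_congr fun e _ => ⟨?_, fun h => ?_⟩
  · rintro ⟨i, j, hij, hi, hj⟩
    rw [← hi, ← hj]
    have := List.pairwise_iff_getElem.1 (List.pairwise_pair_sublist (wordOf W σ)) i j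
      (by simp) (by simp) hij
    simpa [getElem_wordOf] using this
  · set w := wordOf W σ
    have hlt := (nodup_wordOf W σ).pairwise_idxOf_lt.forall_sublist h
    have hj : w.idxOf e.2 < w.length := List.idxOf_lt_length_of_mem (h.subset (by simp))
    refine ⟨⟨w.idxOf e.1, by simpa [w] using hlt.trans hj⟩,
      ⟨w.idxOf e.2, by simpa [w] using hj⟩, hlt, ?_, ?_⟩
    · rw [← getElem_wordOf W σ _ (hlt.trans hj)]
      exact List.getElem_idxOf _
    · rw [← getElem_wordOf W σ _ hj]
      exact List.getElem_idxOf _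

lemma exists_wordOf_eq {W : Finset V} {w : List V} (hw : w.Nodup) (hW : w.toFinset = W) :
    ∃ σ : Fin W.card ≃ W, wordOf W σ = w := by
  have hlen : w.length = W.card := by rw [← hW, List.toFinset_card_of_nodup hw]
  let f : Fin W.card → W := fun i => ⟨w[i.1], hW ▸ List.mem_toFinset.2 (List.getElem_mem _)⟩
  have hf : f.Injective := fun i j h =>
    Fin.ext ((hw.getElem_inj_iff).1 (congrArg Subtype.val h))
  have hbij := (Fintype.bijective_iff_injective_and_card f).2 ⟨hf, by simp⟩
  refine ⟨Equiv.ofBijective f hbij, ?_⟩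
  exact List.ext_getElem (by simp [hlen]) fun i _ _ => by simp [getElem_wordOf, f]

lemma mem_linExts {W : Finset V} {E : Finset (V × V)} {w : List V} :
    w ∈ linExts W E ↔ w.Nodup ∧ w.toFinset = W ∧ ∀ e ∈ E, [e.1, e.2] <+ w := by
  simp only [linExts, Finset.mem_image, Finset.mem_filter, Finset.mem_univ, true_and]
  constructor
  · rintro ⟨σ, hσ, rfl⟩
    exact ⟨nodup_wordOf W σ, toFinset_wordOf W σ, (isExt_iff_pair_sublist W E σ).1 hσ⟩
  · rintro ⟨hw, hW, hE⟩
    obtain ⟨σ, rfl⟩ := exists_wordOf_eq hw hW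
    exact ⟨σ, (isExt_iff_pair_sublist W E σ).2 hE, rfl⟩

lemma PsiG_eq_sum_linExts (W : Finset V) (E : Finset (V × V)) :
    PsiG W E = ∑ w ∈ linExts W E, psi w := by
  rw [linExts, Finset.sum_image fun σ _ τ _ h => wordOf_injective W h, Finset.sum_filter]
  rfl

def inducedEdges (W : Finset V) (E : Finset (V × V)) : Finset (V × V) :=
  E.filter fun e => e.1 ∈ W ∧ e.2 ∈ W

lemma filter_mem_linExts {W T : Finset V} {E : Finset (V × V)} {w : List V}
    (hw : w ∈ linExts W E) (hT : T ⊆ W) :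
    w.filter (· ∈ T) ∈ linExts T (inducedEdges T E) := by
  obtain ⟨hnd, hW, hE⟩ := mem_linExts.1 hw
  refine mem_linExts.2 ⟨hnd.filter _, ?_, fun e he => ?_⟩
  · ext x
    simpa [← hW] using fun hx => hT hx
  · obtain ⟨he, h₁, h₂⟩ := Finset.mem_filter.1 he
    simpa [h₁, h₂] using (hE e he).filter (· ∈ T)

lemma filter_mem_eq_of_isChain {W : Finset V} {E : Finset (V × V)} {w vs : List V}
    (hw : w ∈ linExts W E) (hnd : vs.Nodup) (hvs : vs.toFinset ⊆ W)
    (hchain : vs.IsChain fun a b => (a, b) ∈ E) : w.filter (· ∈ vs) = vs := by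
  obtain ⟨hwnd, hW, hE⟩ := mem_linExts.1 hw
  refine hchain.imp (fun a b h => hE (a, b) h) |>.filter_mem_eq hwnd hnd fun x hx => ?_
  simpa [← hW] using hvs (List.mem_toFinset.2 hx)

lemma linExts_chain {vs : List V} (hnd : vs.Nodup) :
    linExts vs.toFinset (vs.zip vs.tail).toFinset = {vs} := by
  ext w
  rw [Finset.mem_singleton]
  constructor
  · intro hw
    have hchain : vs.IsChain fun a b => (a, b) ∈ (vs.zip vs.tail).toFinset :=
      List.isChain_iff_forall_mem_zip_tail.2 fun p hp => List.mem_toFinset.2 hp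
    rw [← filter_mem_eq_of_isChain hw hnd le_rfl hchain, eq_comm, List.filter_eq_self]
    intro x hx
    simpa [← List.mem_toFinset, (mem_linExts.1 hw).2.1] using hx
  · rintro rfl
    refine mem_linExts.2 ⟨hnd, rfl, fun p hp => ?_⟩
    exact List.isChain_iff_forall_mem_zip_tail.1 (List.pairwise_pair_sublist w).isChain p
      (List.mem_toFinset.1 hp)

lemma NG_chain {vs : List V} (hnd : vs.Nodup) :
    NG vs.toFinset (vs.zip vs.tail).toFinset = 1 := by
  rw [NG, PsiG_eq_sum_linExts, linExts_chain hnd, Finset.sum_singleton,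
    List.prod_toFinset _ hnd.zip_tail]
  exact psi_mul_diffProd hnd

/-! ### Amalgamated shuffles -/

def amalg (u v : List V) : Finset (List V) :=
  (linExts (u.toFinset ∪ v.toFinset) ∅).filter fun w => u <+ w ∧ v <+ w

lemma mem_amalg {u v w : List V} :
    w ∈ amalg u v ↔
      w.Nodup ∧ (∀ x, x ∈ w ↔ x ∈ u ∨ x ∈ v) ∧ u <+ w ∧ v <+ w := by
  simp [amalg, mem_linExts, Finset.ext_iff, and_assoc]

lemma amalg_comm (u v : List V) : amalg u v = amalg v u := by
  ext w
  simp only [mem_amalg, or_comm, and_comm]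

lemma cons_mem_amalg_cons_iff {a : V} {u v t : List V} (hau : a ∉ u) (hav : a ∉ v) :
    a :: t ∈ amalg (a :: u) v ↔ t ∈ amalg u v := by
  simp only [mem_amalg, List.nodup_cons, List.cons_sublist_cons,
    List.sublist_cons_iff_of_notMem hav, List.mem_cons]
  grind

lemma cons_mem_amalg_cons_cons_iff {a : V} {u v t : List V} (hau : a ∉ u) (hav : a ∉ v) :
    a :: t ∈ amalg (a :: u) (a :: v) ↔ t ∈ amalg u v := by
  simp only [mem_amalg, List.nodup_cons, List.cons_sublist_cons, List.mem_cons]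
  grind

lemma amalg_nil_left {v : List V} (hv : v.Nodup) : amalg [] v = {v} := by
  ext w
  simp only [mem_amalg, Finset.mem_singleton, List.not_mem_nil, false_or, List.nil_sublist,
    true_and]
  constructor
  · rintro ⟨hw, hmem, hsub⟩
    have hperm := (List.perm_ext_iff_of_nodup hv hw).2 fun x => (hmem x).symm
    exact (hsub.eq_of_length hperm.length_eq).symm
  · rintro rfl
    exact ⟨hv, fun _ => Iff.rfl, List.Sublist.refl _⟩

lemma amalg_nil_right {u : List V} (hu : u.Nodup) : amalg u [] = {u} := by
  rw [amalg_comm, amalg_nil_left hu]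

lemma exists_eq_cons_of_mem_amalg {a : V} {u v w : List V} (hw : w ∈ amalg (a :: u) v) :
    ∃ h t, w = h :: t ∧ (h ∈ a :: u ∨ h ∈ v) := by
  obtain ⟨-, hmem, -⟩ := mem_amalg.1 hw
  have hne : w ≠ [] := by
    rintro rfl
    simpa using (hmem a).2 (Or.inl List.mem_cons_self)
  obtain ⟨h, t, rfl⟩ := List.exists_cons_of_ne_nil hne
  exact ⟨h, t, rfl, (hmem h).1 List.mem_cons_self⟩

lemma eq_of_cons_mem_amalg_left {h a : V} {u v t : List V} (hw : h :: t ∈ amalg (a :: u) v)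
    (hh : h ∈ a :: u) : h = a :=
  (List.eq_of_cons_sublist_cons_of_mem (List.nodup_cons.1 (mem_amalg.1 hw).1).1
    (mem_amalg.1 hw).2.2.1 hh).symm

lemma eq_of_cons_mem_amalg_right {h b : V} {u v t : List V} (hw : h :: t ∈ amalg u (b :: v))
    (hh : h ∈ b :: v) : h = b :=
  eq_of_cons_mem_amalg_left (amalg_comm u _ ▸ hw) hh

lemma amalg_cons_cons_self {a : V} {u v : List V} (hau : a ∉ u) (hav : a ∉ v) :
    amalg (a :: u) (a :: v) = (amalg u v).image (a :: ·) := by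
  ext w
  rw [Finset.mem_image]
  constructor
  · intro hw
    obtain ⟨h, t, rfl, hh⟩ := exists_eq_cons_of_mem_amalg hw
    obtain rfl : h = a := hh.elim (eq_of_cons_mem_amalg_left hw) (eq_of_cons_mem_amalg_right hw)
    exact ⟨t, (cons_mem_amalg_cons_cons_iff hau hav).1 hw, rfl⟩
  · rintro ⟨t, ht, rfl⟩
    exact (cons_mem_amalg_cons_cons_iff hau hav).2 ht

lemma amalg_cons_cons_of_ne {a b : V} {u v : List V} (hab : a ≠ b) (hau : a ∉ u)
    (hbv : b ∉ v) :
    amalg (a :: u) (b :: v) =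
      (if a ∈ v then ∅ else (amalg u (b :: v)).image (a :: ·)) ∪
        (if b ∈ u then ∅ else (amalg (a :: u) v).image (b :: ·)) := by
  have hcons_a (t : List V) (hav : a ∉ v) :
      a :: t ∈ amalg (a :: u) (b :: v) ↔ t ∈ amalg u (b :: v) :=
    cons_mem_amalg_cons_iff hau (by simp [hab, hav])
  have hcons_b (t : List V) (hbu : b ∉ u) :
      b :: t ∈ amalg (a :: u) (b :: v) ↔ t ∈ amalg (a :: u) v := by
    rw [amalg_comm, cons_mem_amalg_cons_iff hbv (by simp [Ne.symm hab, hbu]), amalg_comm]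
  ext w
  constructor
  · intro hw
    obtain ⟨h, t, rfl, hh | hh⟩ := exists_eq_cons_of_mem_amalg hw
    · obtain rfl := eq_of_cons_mem_amalg_left hw hh
      have hav : h ∉ v := fun ha =>
        hab (eq_of_cons_mem_amalg_right hw (List.mem_cons_of_mem _ ha))
      exact Finset.mem_union_left _ (by simpa [hav] using (hcons_a t hav).1 hw)
    · obtain rfl := eq_of_cons_mem_amalg_right hw hh
      have hbu : h ∉ u := fun hb =>
        hab (eq_of_cons_mem_amalg_left hw (List.mem_cons_of_mem _ hb)).symm
      exact Finset.mem_union_right _ (by simpa [hbu] using (hcons_b t hbu).1 hw)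
  · intro hw
    rcases Finset.mem_union.1 hw with hw | hw
    · split_ifs at hw with hav
      · simp at hw
      obtain ⟨t, ht, rfl⟩ := Finset.mem_image.1 hw
      exact (hcons_a t hav).2 ht
    · split_ifs at hw with hbu
      · simp at hw
      obtain ⟨t, ht, rfl⟩ := Finset.mem_image.1 hw
      exact (hcons_b t hbu).2 ht

/-! ### The amalgamated shuffle identity -/

def Compatible (u v : List V) : Prop := u.filter (· ∈ v) = v.filter (· ∈ u)

lemma Compatible.symm {u v : List V} (h : Compatible u v) : Compatible v u := Eq.symm h

lemma Compatible.of_cons_left {a : V} {u v : List V} (hav : a ∉ v)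
    (h : Compatible (a :: u) v) : Compatible u v := by
  unfold Compatible at h ⊢
  rwa [List.filter_cons_of_neg (by simpa using hav), List.filter_mem_cons_of_notMem hav] at h

lemma filter_cons_mem_cons_cons {a : V} {u v : List V} (hau : a ∉ u) :
    (a :: u).filter (· ∈ a :: v) = a :: u.filter (· ∈ v) := by
  rw [List.filter_cons_of_pos (by simp), List.filter_mem_cons_of_notMem hau]

lemma Compatible.of_cons_cons {a : V} {u v : List V} (hau : a ∉ u) (hav : a ∉ v)
    (h : Compatible (a :: u) (a :: v)) : Compatible u v := by
  unfold Compatible at h ⊢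
  rw [filter_cons_mem_cons_cons hau, filter_cons_mem_cons_cons hav] at h
  exact (List.cons.inj h).2

lemma diffProd_cons_filter_eq_zero {a : V} {u v : List V} (ha : a ∈ v) :
    diffProd (a :: (a :: u).filter (· ∈ v)) = 0 := by
  simp [List.filter_cons_of_pos (p := (· ∈ v)) (by simpa using ha), diffProd_cons_cons]

/-- A first letter shared with the other word contributes nothing: the factor `x_a - x_a` of
the right-hand side vanishes. -/
lemma sum_amalg_cons_cons_of_ne (φ : List V → K V) (κ : V → K V)
    (hφ : ∀ h t, φ (h :: t) = κ h * psi (h :: t)) {a b : V} {u v : List V} (hab : a ≠ b)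
    (hu : (a :: u).Nodup) (hv : (b :: v).Nodup) (hc : Compatible (a :: u) (b :: v))
    (hA : a ∉ v → ∑ t ∈ amalg u (b :: v), psi (a :: t) =
      psi (a :: u) * psi (a :: b :: v) * diffProd (a :: u.filter (· ∈ b :: v)))
    (hB : b ∉ u → ∑ t ∈ amalg (a :: u) v, psi (b :: t) =
      psi (b :: a :: u) * psi (b :: v) * diffProd (b :: (a :: u).filter (· ∈ v))) :
    ∑ w ∈ amalg (a :: u) (b :: v), φ w =
      κ a * psi (a :: u) * psi (a :: b :: v) * diffProd (a :: (a :: u).filter (· ∈ b :: v)) +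
        κ b * psi (b :: a :: u) * psi (b :: v) *
          diffProd (b :: (a :: u).filter (· ∈ b :: v)) := by
  have hau : a ∉ u := (List.nodup_cons.1 hu).1
  have hbv : b ∉ v := (List.nodup_cons.1 hv).1
  have hdisj : Disjoint (if a ∈ v then ∅ else (amalg u (b :: v)).image (a :: ·))
      (if b ∈ u then ∅ else (amalg (a :: u) v).image (b :: ·)) := by
    split_ifs <;> simp [Finset.disjoint_left, Ne.symm hab]
  rw [amalg_cons_cons_of_ne hab hau hbv, Finset.sum_union hdisj]
  congr 1
  · by_cases hav : a ∈ v
    · rw [diffProd_cons_filter_eq_zero (List.mem_cons_of_mem b hav)]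
      simp [hav]
    · rw [if_neg hav, Finset.sum_image fun _ _ _ _ h => List.cons_injective h]
      simp only [hφ, ← Finset.mul_sum]
      rw [hA hav, List.filter_cons_of_neg (by simp [hab, hav])]
      ring
  · by_cases hbu : b ∈ u
    · rw [hc, diffProd_cons_filter_eq_zero (List.mem_cons_of_mem a hbu)]
      simp [hbu]
    · rw [if_neg hbu, Finset.sum_image fun _ _ _ _ h => List.cons_injective h]
      simp only [hφ, ← Finset.mul_sum]
      rw [hB hbu, List.filter_mem_cons_of_notMem (by simp [Ne.symm hab, hbu])]
      ring

lemma sum_psi_cons_amalg {s : V} {u v : List V} (hsu : s ∉ u) (hsv : s ∉ v) (hu : u.Nodup)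
    (hv : v.Nodup) (hc : Compatible u v) :
    ∑ t ∈ amalg u v, psi (s :: t) =
      psi (s :: u) * psi (s :: v) * diffProd (s :: u.filter (· ∈ v)) := by
  induction u generalizing s v with
  | nil => simp [amalg_nil_left hv]
  | cons a u ihu =>
    induction v generalizing s with
    | nil => simp [amalg_nil_right hu]
    | cons b v ihv =>
      have hsa := xv_sub_xv_ne_zero (V := V) (List.ne_of_not_mem_cons hsu)
      have hsb := xv_sub_xv_ne_zero (V := V) (List.ne_of_not_mem_cons hsv)
      have hau : a ∉ u := (List.nodup_cons.1 hu).1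
      have hbv : b ∉ v := (List.nodup_cons.1 hv).1
      by_cases hab : a = b
      · subst hab
        rw [amalg_cons_cons_self hau hbv, Finset.sum_image fun _ _ _ _ h => List.cons_injective h,
          filter_cons_mem_cons_cons hau]
        simp only [psi_cons_cons s a, ← Finset.mul_sum]
        rw [ihu hau hbv hu.of_cons hv.of_cons (hc.of_cons_cons hau hbv), diffProd_cons_cons s a]
        field_simp
      · have hab' := xv_sub_xv_ne_zero (V := V) hab
        have hba' := xv_sub_xv_ne_zero (V := V) (Ne.symm hab)
        rw [sum_amalg_cons_cons_of_ne (fun t => psi (s :: t)) (fun h => (xv s - xv h)⁻¹)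
          (psi_cons_cons s) hab hu hv hc
          (fun hav => ihu hau (by simp [hab, hav]) hu.of_cons hv
            (hc.of_cons_left (by simp [hab, hav])))
          (fun hbu => ihv (by simp [Ne.symm hab, hbu]) hbv hv.of_cons
            (hc.symm.of_cons_left (by simp [Ne.symm hab, hbu])).symm)]
        generalize (a :: u).filter (· ∈ b :: v) = c
        rcases c with _ | ⟨q, c⟩ <;>
          simp only [psi_cons_cons, diffProd_cons_cons, diffProd_singleton] <;>
          field_simp <;> ring

theorem sum_psi_amalg {u v : List V} (hu : u.Nodup) (hv : v.Nodup) (hc : Compatible u v)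
    (hne : u.filter (· ∈ v) ≠ []) :
    ∑ w ∈ amalg u v, psi w = psi u * psi v * diffProd (u.filter (· ∈ v)) := by
  rcases u with _ | ⟨a, u⟩
  · simp at hne
  rcases v with _ | ⟨b, v⟩
  · simp at hne
  have hau : a ∉ u := (List.nodup_cons.1 hu).1
  have hbv : b ∉ v := (List.nodup_cons.1 hv).1
  by_cases hab : a = b
  · subst hab
    rw [amalg_cons_cons_self hau hbv, Finset.sum_image fun _ _ _ _ h => List.cons_injective h,
      filter_cons_mem_cons_cons hau]
    exact sum_psi_cons_amalg hau hbv hu.of_cons hv.of_cons (hc.of_cons_cons hau hbv)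
  · have hab' := xv_sub_xv_ne_zero (V := V) hab
    have hba' := xv_sub_xv_ne_zero (V := V) (Ne.symm hab)
    rw [sum_amalg_cons_cons_of_ne psi (fun _ => 1) (fun _ _ => (one_mul _).symm) hab hu hv hc
      (fun hav => sum_psi_cons_amalg hau (by simp [hab, hav]) hu.of_cons hv
        (hc.of_cons_left (by simp [hab, hav])))
      (fun hbu => sum_psi_cons_amalg (by simp [Ne.symm hab, hbu]) hbv hu hv.of_cons
        (hc.symm.of_cons_left (by simp [Ne.symm hab, hbu])).symm)]
    obtain ⟨q, c, hqc⟩ := List.exists_cons_of_ne_nil hne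
    rw [hqc]
    simp only [psi_cons_cons, diffProd_cons_cons]
    field_simp
    ring

/-! ### Gluing regions along the chain -/

lemma filter_linExts_eq_amalg {P Q : Finset V} {F : Finset (V × V)} {u v : List V}
    (hF : ∀ e ∈ F, (e.1 ∈ P ∧ e.2 ∈ P) ∨ (e.1 ∈ Q ∧ e.2 ∈ Q))
    (hu : u ∈ linExts P (inducedEdges P F)) (hv : v ∈ linExts Q (inducedEdges Q F)) :
    (linExts (P ∪ Q) F).filter (fun w => (w.filter (· ∈ P), w.filter (· ∈ Q)) = (u, v)) =
      amalg u v := by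
  obtain ⟨-, rfl, huF⟩ := mem_linExts.1 hu
  obtain ⟨-, rfl, hvF⟩ := mem_linExts.1 hv
  ext w
  simp only [Finset.mem_filter, mem_linExts, mem_amalg, Prod.mk.injEq, List.mem_toFinset,
    Finset.ext_iff, Finset.mem_union]
  constructor
  · rintro ⟨⟨hw, hmem, -⟩, hwu, hwv⟩
    exact ⟨hw, hmem, hwu ▸ List.filter_sublist, hwv ▸ List.filter_sublist⟩
  · rintro ⟨hw, hmem, hsu, hsv⟩
    refine ⟨⟨hw, hmem, fun e he => ?_⟩, hsu.filter_mem_eq hw, hsv.filter_mem_eq hw⟩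
    rcases hF e he with h | h
    · exact (huF e (Finset.mem_filter.2 ⟨he, h⟩)).trans hsu
    · exact (hvF e (Finset.mem_filter.2 ⟨he, h⟩)).trans hsv

lemma filter_mem_eq_of_inter_eq {P Q : Finset V} {F : Finset (V × V)} {u v vs : List V}
    (hu : u ∈ linExts P (inducedEdges P F)) (hv : v.toFinset = Q) (hPQ : P ∩ Q = vs.toFinset)
    (hnd : vs.Nodup) (hchain : vs.IsChain fun a b => (a, b) ∈ F) : u.filter (· ∈ v) = vs := by
  have hvsP : vs.toFinset ⊆ P := hPQ ▸ Finset.inter_subset_left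
  have hchainP : vs.IsChain fun a b => (a, b) ∈ inducedEdges P F := by
    refine List.isChain_iff_forall_mem_zip_tail.2 fun p hp => Finset.mem_filter.2
      ⟨List.isChain_iff_forall_mem_zip_tail.1 hchain p hp, ?_⟩
    obtain ⟨h₁, h₂⟩ := List.mem_of_mem_zip_tail hp
    exact ⟨hvsP (List.mem_toFinset.2 h₁), hvsP (List.mem_toFinset.2 h₂)⟩
  rw [← filter_mem_eq_of_isChain hu hnd hvsP hchainP]
  refine List.filter_congr fun x hx => ?_
  have hxP : x ∈ P := by simpa [← (mem_linExts.1 hu).2.1] using hx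
  simp [← List.mem_toFinset, ← hPQ, hv, hxP]

lemma PsiG_union {P Q : Finset V} {F : Finset (V × V)} {vs : List V} (hne : vs ≠ [])
    (hnd : vs.Nodup) (hPQ : P ∩ Q = vs.toFinset)
    (hF : ∀ e ∈ F, (e.1 ∈ P ∧ e.2 ∈ P) ∨ (e.1 ∈ Q ∧ e.2 ∈ Q))
    (hchain : vs.IsChain fun a b => (a, b) ∈ F) :
    PsiG (P ∪ Q) F = PsiG P (inducedEdges P F) * PsiG Q (inducedEdges Q F) * diffProd vs := by
  rw [PsiG_eq_sum_linExts, ← Finset.sum_fiberwise_of_maps_to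
    (g := fun w => (w.filter (· ∈ P), w.filter (· ∈ Q)))
    fun w hw => Finset.mk_mem_product (filter_mem_linExts hw Finset.subset_union_left)
      (filter_mem_linExts hw Finset.subset_union_right), Finset.sum_product]
  rw [PsiG_eq_sum_linExts, PsiG_eq_sum_linExts, Finset.sum_mul_sum]
  simp only [Finset.sum_mul]
  refine Finset.sum_congr rfl fun u hu => Finset.sum_congr rfl fun v hv => ?_
  have huv := filter_mem_eq_of_inter_eq hu (mem_linExts.1 hv).2.1 hPQ hnd hchain
  have hvu := filter_mem_eq_of_inter_eq hv (mem_linExts.1 hu).2.1 (by rwa [Finset.inter_comm])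
    hnd hchain
  rw [filter_linExts_eq_amalg hF hu hv, sum_psi_amalg (mem_linExts.1 hu).1 (mem_linExts.1 hv).1
    (huv.trans hvu.symm) (huv ▸ hne), huv]

lemma inducedEdges_inter (P Q : Finset V) (F : Finset (V × V)) :
    inducedEdges P F ∩ inducedEdges Q F = inducedEdges (P ∩ Q) F := by
  ext e
  simp only [inducedEdges, Finset.mem_inter, Finset.mem_filter]
  tauto

lemma inducedEdges_inducedEdges {T W : Finset V} (F : Finset (V × V)) (h : T ⊆ W) :
    inducedEdges T (inducedEdges W F) = inducedEdges T F := by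
  ext e
  simp only [inducedEdges, Finset.mem_filter]
  exact ⟨fun h' => ⟨h'.1.1, h'.2⟩, fun h' => ⟨⟨h'.1, h h'.2.1, h h'.2.2⟩, h'.2⟩⟩

lemma NG_union {P Q : Finset V} {F : Finset (V × V)} {vs : List V} (hne : vs ≠ [])
    (hnd : vs.Nodup) (hPQ : P ∩ Q = vs.toFinset)
    (hF : ∀ e ∈ F, (e.1 ∈ P ∧ e.2 ∈ P) ∨ (e.1 ∈ Q ∧ e.2 ∈ Q))
    (hC : inducedEdges vs.toFinset F = (vs.zip vs.tail).toFinset) :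
    NG (P ∪ Q) F = NG P (inducedEdges P F) * NG Q (inducedEdges Q F) := by
  have hchain : vs.IsChain fun a b => (a, b) ∈ F :=
    List.isChain_iff_forall_mem_zip_tail.2 fun p hp =>
      (Finset.mem_filter.1 (hC ▸ List.mem_toFinset.2 hp : p ∈ inducedEdges vs.toFinset F)).1
  have hunion : inducedEdges P F ∪ inducedEdges Q F = F := by
    ext e
    simp only [inducedEdges, Finset.mem_union, Finset.mem_filter]
    exact ⟨by tauto, fun he => (hF e he).imp (⟨he, ·⟩) (⟨he, ·⟩)⟩
  have hprod : (∏ e ∈ inducedEdges P F, (xv e.1 - xv e.2)) *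
      ∏ e ∈ inducedEdges Q F, (xv e.1 - xv e.2) =
        (∏ e ∈ F, (xv e.1 - xv e.2)) * diffProd vs := by
    rw [← Finset.prod_union_inter, hunion, inducedEdges_inter, hPQ, hC,
      List.prod_toFinset _ hnd.zip_tail, diffProd]
  rw [NG, NG, NG, PsiG_union hne hnd hPQ hF hchain, mul_mul_mul_comm, hprod]
  ring

lemma NG_biUnion_union {ι : Type*} [DecidableEq ι] {F : Finset (V × V)} {vs : List V}
    (hne : vs ≠ []) (hnd : vs.Nodup) (hC : inducedEdges vs.toFinset F = (vs.zip vs.tail).toFinset)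
    (S : ι → Finset V) (hdisj : ∀ i j, i ≠ j → Disjoint (S i) (S j))
    (hSC : ∀ i, Disjoint (S i) vs.toFinset)
    (hcross : ∀ e ∈ F, ∀ i, (e.1 ∈ S i → e.2 ∈ S i ∪ vs.toFinset) ∧
      (e.2 ∈ S i → e.1 ∈ S i ∪ vs.toFinset))
    (s : Finset ι) :
    NG (s.biUnion S ∪ vs.toFinset) (inducedEdges (s.biUnion S ∪ vs.toFinset) F) =
      ∏ i ∈ s, NG (S i ∪ vs.toFinset) (inducedEdges (S i ∪ vs.toFinset) F) := by
  induction s using Finset.induction_on with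
  | empty => simp [hC, NG_chain hnd]
  | insert i s hi ih =>
    set C := vs.toFinset
    set Q := s.biUnion S ∪ C
    have hW : (insert i s).biUnion S ∪ C = (S i ∪ C) ∪ Q := by
      rw [Finset.biUnion_insert]
      ext x
      simp only [Q, Finset.mem_union]
      tauto
    have hPQ : (S i ∪ C) ∩ Q = C := by
      ext x
      simp only [Q, Finset.mem_inter, Finset.mem_union, Finset.mem_biUnion]
      constructor
      · rintro ⟨hx | hx, ⟨j, hj, hxj⟩ | hx'⟩
        · exact absurd hxj (Finset.disjoint_left.1 (hdisj i j fun h => hi (h ▸ hj)) hx)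
        · exact absurd hx' (Finset.disjoint_left.1 (hSC i) hx)
        · exact hx
        · exact hx
      · exact fun hx => ⟨Or.inr hx, Or.inr hx⟩
    have hF : ∀ e ∈ inducedEdges ((S i ∪ C) ∪ Q) F,
        (e.1 ∈ S i ∪ C ∧ e.2 ∈ S i ∪ C) ∨ (e.1 ∈ Q ∧ e.2 ∈ Q) := by
      have hQ : ∀ x ∈ (S i ∪ C) ∪ Q, x ∉ S i → x ∈ Q := by
        intro x hx hxi
        rcases Finset.mem_union.1 hx with hx | hx
        · exact Finset.mem_union_right _ ((Finset.mem_union.1 hx).resolve_left hxi)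
        · exact hx
      intro e he
      obtain ⟨he, h₁, h₂⟩ := Finset.mem_filter.1 he
      by_cases hi₁ : e.1 ∈ S i
      · exact Or.inl ⟨Finset.mem_union_left _ hi₁, (hcross e he i).1 hi₁⟩
      by_cases hi₂ : e.2 ∈ S i
      · exact Or.inl ⟨(hcross e he i).2 hi₂, Finset.mem_union_left _ hi₂⟩
      exact Or.inr ⟨hQ _ h₁ hi₁, hQ _ h₂ hi₂⟩
    rw [Finset.prod_insert hi, ← ih, hW, NG_union hne hnd hPQ hF
      (by rw [inducedEdges_inducedEdges F
        (Finset.subset_union_right.trans Finset.subset_union_left)]; exact hC),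
      inducedEdges_inducedEdges F Finset.subset_union_left,
      inducedEdges_inducedEdges F Finset.subset_union_right]

lemma inducedEdges_toFinset_eq_of_isChain {E : Finset (V × V)} (hacyc : Acyclic E)
    (htrans : ∀ e ∈ E, ∀ m : V,
      ¬ (Relation.TransGen (fun a b => (a, b) ∈ E) e.1 m ∧
          Relation.TransGen (fun a b => (a, b) ∈ E) m e.2))
    {vs : List V} (hchain : vs.IsChain fun a b => (a, b) ∈ E) :
    inducedEdges vs.toFinset E = (vs.zip vs.tail).toFinset := by
  have hpath := List.pairwise_iff_getElem.1
    (hchain.imp fun _ _ h => Relation.TransGen.single h).pairwise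
  ext ⟨x, y⟩
  simp only [inducedEdges, Finset.mem_filter, List.mem_toFinset]
  constructor
  · rintro ⟨he, hx, hy⟩
    obtain ⟨i, hi, rfl⟩ := List.getElem_of_mem hx
    obtain ⟨j, hj, rfl⟩ := List.getElem_of_mem hy
    rcases lt_trichotomy i j with hij | rfl | hij
    · rcases (Nat.succ_le_of_lt hij).eq_or_lt with rfl | hij'
      · exact List.mem_zip_tail_of_getElem hj
      · exact absurd ⟨.single (hchain.getElem i (by omega)), hpath _ _ _ hj hij'⟩
          (htrans _ he _)
    · exact (hacyc _ (.single he)).elim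
    · exact (hacyc _ ((Relation.TransGen.single he).trans (hpath _ _ hj hi hij))).elim
  · intro hp
    exact ⟨List.isChain_iff_forall_mem_zip_tail.1 hchain _ hp, List.mem_of_mem_zip_tail hp⟩

end

theorem chain_factorization_general (V : Type) [Fintype V] [DecidableEq V]
    (E : Finset (V × V)) (hacyc : Acyclic E)
    (htrans : ∀ e ∈ E, ∀ m : V,
      ¬ (Relation.TransGen (fun a b => (a, b) ∈ E) e.1 m ∧
          Relation.TransGen (fun a b => (a, b) ∈ E) m e.2))
    (vs : List V) (hne : vs ≠ []) (hnd : vs.Nodup)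
    (hchain : List.Chain' (fun a b => (a, b) ∈ E) vs)
    (k : ℕ) (S : Fin k → Finset V)
    (hdisj : ∀ i j, i ≠ j → Disjoint (S i) (S j))
    (hcover : Finset.univ.biUnion S = Finset.univ \ vs.toFinset)
    (hcross : ∀ e ∈ E, ∀ i,
      (e.1 ∈ S i → e.2 ∈ S i ∪ vs.toFinset) ∧ (e.2 ∈ S i → e.1 ∈ S i ∪ vs.toFinset)) :
    NG (Finset.univ : Finset V) E =
      ∏ i : Fin k,
        NG (S i ∪ vs.toFinset)
          (E.filter fun e => e.1 ∈ S i ∪ vs.toFinset ∧ e.2 ∈ S i ∪ vs.toFinset) := by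
  have hSC (i : Fin k) : Disjoint (S i) vs.toFinset := by
    have hS : S i ⊆ Finset.univ \ vs.toFinset :=
      hcover ▸ Finset.subset_biUnion_of_mem S (Finset.mem_univ i)
    exact (Finset.subset_sdiff.1 hS).2
  have huniv : Finset.univ.biUnion S ∪ vs.toFinset = Finset.univ := by
    rw [hcover, Finset.sdiff_union_of_subset (Finset.subset_univ _)]
  have hE : inducedEdges Finset.univ E = E := Finset.filter_true_of_mem fun _ _ => by simp
  have := NG_biUnion_union hne hnd (inducedEdges_toFinset_eq_of_isChain hacyc htrans hchain)
    S hdisj hSC hcross Finset.univ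
  rwa [huniv, hE] at this

/-- chain factorization.  If the vertex set of a chain `vs` of `G`
disconnects `G` into components `S 0, …, S (k-1)`, then `N(G)` is the product of
the `N` of the corresponding regions (induced subgraphs on `S i ∪ V_c`). -/
theorem chain_factorization (V : Type) [Fintype V] [DecidableEq V]
    (E : Finset (V × V)) (hacyc : Acyclic E) (hconn : (undirected E).Connected)
    (htrans : ∀ e ∈ E, ∀ m : V,
      ¬ (Relation.TransGen (fun a b => (a, b) ∈ E) e.1 m ∧
          Relation.TransGen (fun a b => (a, b) ∈ E) m e.2))
    (vs : List V) (hne : vs ≠ []) (hnd : vs.Nodup)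
    (hchain : List.Chain' (fun a b => (a, b) ∈ E) vs)
    (k : ℕ) (S : Fin k → Finset V)
    (hdisj : ∀ i j, i ≠ j → Disjoint (S i) (S j))
    (hcover : Finset.univ.biUnion S = Finset.univ \ vs.toFinset)
    (hSne : ∀ i, (S i).Nonempty)
    (hSconn : ∀ i, (SimpleGraph.induce (↑(S i) : Set V) (undirected E)).Connected)
    (hcross : ∀ e ∈ E, ∀ i,
      (e.1 ∈ S i → e.2 ∈ S i ∪ vs.toFinset) ∧ (e.2 ∈ S i → e.1 ∈ S i ∪ vs.toFinset)) :
    NG (Finset.univ : Finset V) E =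
      ∏ i : Fin k,
        NG (S i ∪ vs.toFinset)
          (E.filter fun e => e.1 ∈ S i ∪ vs.toFinset ∧ e.2 ∈ S i ∪ vs.toFinset) :=
  chain_factorization_general V E hacyc htrans vs hne hnd hchain k S hdisj hcover hcross
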